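/- arXiv:2003.01647 — 3 statements merged into one kernel-verified Lean document; each statement's English description precedes it below -/
import Mathlib

section
/- If A is an n × n × n alternating sign hypermatrix and L(A) is its corresponding ASHL, defined by L(A)_{ij} = ∑_{k=1}^n k·a_{ijk}, then every entry of L(A) lies in the interval [1, n]. -/
open Finset

/-- The nonzero entries of the sequence `f`, in order. -/
def nonzeroList {n : ℕ} (f : Fin n → ℤ) : List ℤ :=
  ((List.finRange n).map f).filter (· != 0)

/-- The nonzero entries of `f` alternate in sign, beginning and ending with `+1`. -/
def AltLine {n : ℕ} (f : Fin n → ℤ) : Prop :=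
  nonzeroList f ≠ [] ∧
  (∀ i : ℕ, ∀ h : i < (nonzeroList f).length,
      (nonzeroList f).get ⟨i, h⟩ = (-1 : ℤ) ^ i) ∧
  (nonzeroList f).getLast? = some 1

/-- Alternating sign matrix. -/
def IsASM {n : ℕ} (M : Fin n → Fin n → ℤ) : Prop :=
  (∀ i, AltLine (fun j => M i j)) ∧ (∀ j, AltLine (fun i => M i j))

/-- Alternating sign hypermatrix. -/
def IsASHM {n : ℕ} (A : Fin n → Fin n → Fin n → ℤ) : Prop :=
  (∀ j k, AltLine (fun i => A i j k)) ∧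
  (∀ i k, AltLine (fun j => A i j k)) ∧
  (∀ i j, AltLine (fun k => A i j k))

/-- The ASHL of an ASHM: `L(A)_{ij} = ∑ k·a_{ijk}` (planes indexed `1,…,n`). -/
def ashl {n : ℕ} (A : Fin n → Fin n → Fin n → ℤ) (i j : Fin n) : ℤ :=
  ∑ k : Fin n, ((k : ℕ) + 1 : ℤ) * A i j k

def tsign {n : ℕ} (a b x : Fin n) : ℤ :=
  if x = a then 1 else if x = b then -1 else 0

/-- The T-block `T_{i₁,j₁,k₁ : i₂,j₂,k₂}`. -/
def Tblock {n : ℕ} (i₁ i₂ j₁ j₂ k₁ k₂ : Fin n) (i j k : Fin n) : ℤ :=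
  tsign i₁ i₂ i * tsign j₁ j₂ j * tsign k₁ k₂ k

/-! By Abel summation `∑ₖ k·aₖ = ∑ₘ ∑_{k ≥ m} aₖ`. Along an alternating line every tail sum
`∑_{k ≥ m} aₖ` is `1` minus a partial sum of the sequence `+1, -1, +1, …`, hence lies in
`{0, 1}`; the first tail is the whole line sum, `1`. -/

theorem List.sum_filter_ne_zero {M : Type*} [AddMonoid M] [DecidableEq M] (l : List M) :
    (l.filter (· != 0)).sum = l.sum := by
  induction l with
  | nil => rfl
  | cons a l ih => by_cases h : a = 0 <;> simp [h, ih]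

theorem Finset.sum_succ_mul_eq_sum_sum_Ici {R : Type*} [Semiring R] {n : ℕ} (f : Fin n → R) :
    ∑ k : Fin n, ((k : ℕ) + 1 : R) * f k = ∑ m, ∑ k ∈ Ici m, f k := by
  calc ∑ k : Fin n, ((k : ℕ) + 1 : R) * f k = ∑ k, ∑ _m ∈ Iic k, f k := by
        simp [Fin.card_Iic, nsmul_eq_mul]
    _ = ∑ m, ∑ k ∈ Ici m, f k := Finset.sum_comm' (by simp)

namespace AltLine

variable {n : ℕ} {f : Fin n → ℤ}

theorem pos (hf : AltLine f) : 0 < n := by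
  rcases n with _ | n
  · exact absurd rfl hf.1
  · exact n.succ_pos

theorem nonzeroList_eq_range_map (hf : AltLine f) :
    nonzeroList f = (List.range (nonzeroList f).length).map ((-1 : ℤ) ^ ·) :=
  List.ext_get (by simp) fun i h _ => by simpa using hf.2.1 i h

theorem odd_length_nonzeroList (hf : AltLine f) : Odd (nonzeroList f).length := by
  obtain ⟨hne, halt, hlast⟩ := hf
  have hlen : 0 < (nonzeroList f).length := List.length_pos_iff.2 hne
  have hlast' : (-1 : ℤ) ^ ((nonzeroList f).length - 1) = 1 := by
    rw [List.getLast?_eq_getLast_of_ne_nil hne, List.getLast_eq_getElem] at hlast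
    rw [← halt _ (Nat.sub_lt hlen one_pos)]
    exact Option.some.inj hlast
  obtain ⟨c, hc⟩ := (neg_one_pow_eq_one_iff_even (by norm_num)).1 hlast'
  exact ⟨c, by omega⟩

theorem sum_take_nonzeroList (hf : AltLine f) (t : ℕ) :
    ((nonzeroList f).take t).sum = if Even (min t (nonzeroList f).length) then 0 else 1 := by
  rw [hf.nonzeroList_eq_range_map, ← List.map_take, List.take_range, List.length_map,
    List.length_range, ← neg_one_geom_sum]
  rfl

theorem sum_take_ofFn_mem (hf : AltLine f) (m : ℕ) :
    ((List.ofFn f).take m).sum ∈ Set.Icc 0 1 := by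
  have hpre : ((List.ofFn f).take m).filter (· != 0) <+: nonzeroList f := by
    rw [nonzeroList, ← List.ofFn_eq_map]
    exact (List.take_prefix m _).filter _
  rw [← List.sum_filter_ne_zero, List.prefix_iff_eq_take.1 hpre, hf.sum_take_nonzeroList]
  split <;> simp

theorem sum_eq_one (hf : AltLine f) : ∑ k, f k = 1 := by
  have hsum := hf.sum_take_nonzeroList (nonzeroList f).length
  rw [List.take_length, min_self, if_neg (Nat.not_even_iff_odd.2 hf.odd_length_nonzeroList),
    nonzeroList, ← List.ofFn_eq_map, List.sum_filter_ne_zero] at hsum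
  rwa [← List.sum_ofFn]

theorem sum_Ici_mem (hf : AltLine f) (m : Fin n) : ∑ k ∈ Ici m, f k ∈ Set.Icc 0 1 := by
  have hsplit : ∑ k ∈ Ici m, f k = 1 - ((List.ofFn f).take m).sum := by
    have hIci : Ici m = univ.filter (fun k : Fin n => ¬ (k : ℕ) < m) := by
      ext k; simp only [mem_Ici, mem_filter, mem_univ, true_and, not_lt, Fin.le_iff_val_le_val]
    rw [List.sum_take_ofFn, ← hf.sum_eq_one, hIci,
      ← sum_filter_add_sum_filter_not univ (fun k : Fin n => (k : ℕ) < m)]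
    ring
  obtain ⟨h0, h1⟩ := hf.sum_take_ofFn_mem m
  rw [hsplit]
  constructor <;> linarith

theorem one_le_sum_succ_mul (hf : AltLine f) :
    1 ≤ ∑ k : Fin n, ((k : ℕ) + 1 : ℤ) * f k := by
  rw [sum_succ_mul_eq_sum_sum_Ici]
  calc (1 : ℤ) = ∑ k ∈ Ici ⟨0, hf.pos⟩, f k := by
        rw [← hf.sum_eq_one]; congr; ext; simp [Fin.le_iff_val_le_val]
    _ ≤ ∑ m, ∑ k ∈ Ici m, f k :=
        single_le_sum (fun m _ => (hf.sum_Ici_mem m).1) (mem_univ _)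

theorem sum_succ_mul_le (hf : AltLine f) :
    ∑ k : Fin n, ((k : ℕ) + 1 : ℤ) * f k ≤ n := by
  rw [sum_succ_mul_eq_sum_sum_Ici]
  simpa using sum_le_sum fun m (_ : m ∈ univ) => (hf.sum_Ici_mem m).2

end AltLine

theorem ashl_entries_in_range {n : ℕ} (A : Fin n → Fin n → Fin n → ℤ)
    (hA : IsASHM A) :
    ∀ i j, 1 ≤ ashl A i j ∧ ashl A i j ≤ (n : ℤ) := fun i j =>
  ⟨(hA.2.2 i j).one_le_sum_succ_mul, (hA.2.2 i j).sum_succ_mul_le⟩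
end

section
/- For any n × n × n alternating sign hypermatrix A, the first row of L(A) is a permutation of {1,2,…,n}; the same holds for the last row, the first column, and the last column of L(A). -/
open Finset

/-!
An alternating line can neither begin nor end with `-1`. Hence the four border vertical planes
(`i = 1`, `i = n`, `j = 1`, `j = n`) of an ASHM are ASMs without `-1` entries, that is, permutation
matrices. Along such a plane, `L(A)` reads off the level `k` of the unique `1` in each vertical line,
and the permutation makes these levels run exactly once through `1, …, n`.
-/

lemma nonzeroList_eq_map_filter {n : ℕ} (f : Fin n → ℤ) :
    nonzeroList f = ((List.finRange n).filter (fun x => f x != 0)).map f := by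
  rw [nonzeroList, List.filter_map]
  rfl

lemma mem_nonzeroList {n : ℕ} {f : Fin n → ℤ} {a : ℤ} :
    a ∈ nonzeroList f ↔ a ≠ 0 ∧ ∃ x, f x = a := by
  simp [nonzeroList, and_comm]

namespace Pi

variable {ι R : Type*} [DecidableEq ι] [Zero R]

lemma eq_single_of_support_subset_singleton {f : ι → R} {x : ι} {a : R} (hx : f x = a)
    (h : Function.support f ⊆ {x}) : f = Pi.single x a := by
  ext y
  by_cases hy : y = x
  · simp [hy, hx]
  · rw [Pi.single_eq_of_ne hy]
    exact Function.notMem_support.1 fun hy' => hy (h hy')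

lemma single_one_apply_ne_zero_iff [One R] [NeZero (1 : R)] {i k : ι} :
    Pi.single (M := fun _ => R) i 1 k ≠ 0 ↔ k = i := by
  by_cases h : k = i <;> simp [h]

end Pi

namespace AltLine

variable {n : ℕ} {f : Fin n → ℤ}

lemma head_ne_neg_one (hf : AltLine f) (hn : 0 < n) : f ⟨0, hn⟩ ≠ -1 := by
  intro h
  obtain ⟨m, rfl⟩ := Nat.exists_eq_add_one_of_ne_zero hn.ne'
  change f 0 = -1 at h
  have hlist : nonzeroList f = -1 :: nonzeroList (fun x => f x.succ) := by
    rw [nonzeroList, List.finRange_succ, List.map_cons, List.filter_cons_of_pos (by simp [h]),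
      List.map_map, h]
    rfl
  have := hf.2.1 0 (by simp [hlist])
  simp [hlist] at this

lemma last_ne_neg_one (hf : AltLine f) (hn : 0 < n) :
    f ⟨n - 1, Nat.sub_lt hn one_pos⟩ ≠ -1 := by
  intro h
  obtain ⟨m, rfl⟩ := Nat.exists_eq_add_one_of_ne_zero hn.ne'
  change f (Fin.last m) = -1 at h
  have hlist : nonzeroList f = nonzeroList (fun x => f x.castSucc) ++ [-1] := by
    rw [nonzeroList, List.finRange_succ_last, List.map_append, List.filter_append, List.map_map,
      List.map_singleton, h]
    rfl
  have := hf.2.2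
  simp [hlist] at this

lemma nonzeroList_eq_singleton (hf : AltLine f) (hno : ∀ x, f x ≠ -1) :
    nonzeroList f = [1] := by
  obtain ⟨hne, halt, -⟩ := hf
  match hl : nonzeroList f, hne, halt with
  | [a], _, halt => simpa using halt 0 (by simp)
  | a :: b :: l, _, halt =>
    have hb : b = -1 := by simpa using halt 1 (by simp)
    obtain ⟨-, x, hx⟩ := mem_nonzeroList.1 (hl ▸ by simp : b ∈ nonzeroList f)
    exact absurd (hx.trans hb) (hno x)

lemma eq_single_of_forall_ne_neg_one (hf : AltLine f) (hno : ∀ x, f x ≠ -1) :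
    ∃ x, f = Pi.single x 1 := by
  have hsupp := nonzeroList_eq_singleton hf hno
  rw [nonzeroList_eq_map_filter, List.map_eq_singleton_iff] at hsupp
  obtain ⟨x, hx, hfx⟩ := hsupp
  refine ⟨x, Pi.eq_single_of_support_subset_singleton hfx fun y hy => ?_⟩
  have : y ∈ (List.finRange n).filter (fun x => f x != 0) := by simpa using hy
  simpa [hx] using this

end AltLine

lemma bijective_of_rows_eq_single_of_cols_eq_single {ι κ R : Type*} [DecidableEq ι]
    [DecidableEq κ] [Zero R] [One R] [NeZero (1 : R)] {B : ι → κ → R} {d : ι → κ}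
    (hrow : ∀ i, B i = Pi.single (d i) 1) (hcol : ∀ k, ∃ i, (fun i => B i k) = Pi.single i 1) :
    Function.Bijective d := by
  have hrow' : ∀ i k, B i k ≠ 0 ↔ k = d i := fun i k => by
    rw [hrow i]
    exact Pi.single_one_apply_ne_zero_iff
  have hcol' : ∀ k, ∃ i₀, ∀ i, B i k ≠ 0 ↔ i = i₀ := fun k => by
    obtain ⟨i₀, h⟩ := hcol k
    exact ⟨i₀, fun i => congrFun h i ▸ Pi.single_one_apply_ne_zero_iff⟩
  refine ⟨fun i i' hii' => ?_, fun k => ?_⟩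
  · obtain ⟨i₀, h⟩ := hcol' (d i)
    rw [(h i).1 ((hrow' i _).2 rfl), (h i').1 ((hrow' i' _).2 hii')]
  · obtain ⟨i₀, h⟩ := hcol' k
    exact ⟨i₀, ((hrow' i₀ k).1 ((h i₀).2 rfl)).symm⟩

lemma Function.Bijective.existsUnique_val_add_one_eq {ι : Type*} {n : ℕ} {d : ι → Fin n}
    (hd : Function.Bijective d) {m : ℤ} (hm1 : 1 ≤ m) (hmn : m ≤ n) :
    ∃! i, ((d i : ℕ) : ℤ) + 1 = m := by
  have hiff : ∀ i, ((d i : ℕ) : ℤ) + 1 = m ↔ d i = ⟨(m - 1).toNat, by omega⟩ := fun i => by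
    rw [Fin.ext_iff]
    change _ ↔ (d i : ℕ) = (m - 1).toNat
    omega
  simpa only [hiff] using hd.existsUnique ⟨(m - 1).toNat, by omega⟩

lemma IsASM.existsUnique_sum_mul_eq {n : ℕ} {B : Fin n → Fin n → ℤ} (hB : IsASM B)
    (hno : ∀ j k, B j k ≠ -1) {m : ℤ} (hm1 : 1 ≤ m) (hmn : m ≤ n) :
    ∃! j, ∑ k : Fin n, ((k : ℕ) + 1 : ℤ) * B j k = m := by
  choose d hd using fun j => AltLine.eq_single_of_forall_ne_neg_one (hB.1 j) (hno j)
  have hsum : ∀ j, ∑ k : Fin n, ((k : ℕ) + 1 : ℤ) * B j k = ((d j : ℕ) : ℤ) + 1 := fun j => by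
    simp [hd j, Pi.single_apply]
  simp only [hsum]
  have hbij := bijective_of_rows_eq_single_of_cols_eq_single hd fun k =>
    AltLine.eq_single_of_forall_ne_neg_one (hB.2 k) (hno · k)
  exact Function.Bijective.existsUnique_val_add_one_eq hbij hm1 hmn

namespace IsASHM

variable {n : ℕ} {A : Fin n → Fin n → Fin n → ℤ}

lemma isASM_slice_fst (hA : IsASHM A) (i : Fin n) : IsASM (fun j k => A i j k) :=
  ⟨fun j => hA.2.2 i j, fun k => hA.2.1 i k⟩

lemma isASM_slice_snd (hA : IsASHM A) (j : Fin n) : IsASM (fun i k => A i j k) :=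
  ⟨fun i => hA.2.2 i j, fun k => hA.1 j k⟩

end IsASHM

theorem ashl_border_permutation {n : ℕ} (hn : 0 < n)
    (A : Fin n → Fin n → Fin n → ℤ) (hA : IsASHM A) :
    ∀ m : ℤ, 1 ≤ m → m ≤ (n : ℤ) →
      (∃! j, ashl A ⟨0, hn⟩ j = m) ∧
      (∃! j, ashl A ⟨n - 1, Nat.sub_lt hn one_pos⟩ j = m) ∧
      (∃! i, ashl A i ⟨0, hn⟩ = m) ∧
      (∃! i, ashl A i ⟨n - 1, Nat.sub_lt hn one_pos⟩ = m) := by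
  intro m hm1 hmn
  open IsASHM IsASM AltLine in
  exact ⟨existsUnique_sum_mul_eq (isASM_slice_fst hA _)
      (fun j k => head_ne_neg_one (hA.1 j k) hn) hm1 hmn,
    existsUnique_sum_mul_eq (isASM_slice_fst hA _)
      (fun j k => last_ne_neg_one (hA.1 j k) hn) hm1 hmn,
    existsUnique_sum_mul_eq (isASM_slice_snd hA _)
      (fun i k => head_ne_neg_one (hA.2.1 i k) hn) hm1 hmn,
    existsUnique_sum_mul_eq (isASM_slice_snd hA _)
      (fun i k => last_ne_neg_one (hA.2.1 i k) hn) hm1 hmn⟩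
end

section
/- If A and B are n × n × n alternating sign hypermatrices, then the difference A − B can be written as a finite sum of T-blocks (each T-block taken with sign +1 or −1). -/
open Finset

/-! The difference `D = A - B` has every line sum equal to `1 - 1 = 0`. For a zero-sum vector
`f` and any index `a`, `f = ∑_{x ≠ a} f x • (e_x - e_a)`, and `tsign x a = e_x - e_a`. Applying
this along the three directions with `a` the last index gives
`D = ∑_{x, y, z ≠ a} D x y z • T_{x,y,z : a,a,a}`, and the integer combinations of T-blocks
are exactly the sums of T-blocks with signs `±1`. -/

def tblockSums (n : ℕ) : AddSubgroup (Fin n → Fin n → Fin n → ℤ) where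
  carrier := {D | ∃ (m : ℕ) (ε : Fin m → ℤ) (i₁ i₂ j₁ j₂ k₁ k₂ : Fin m → Fin n),
    (∀ t, (ε t = 1 ∨ ε t = -1) ∧ i₁ t < i₂ t ∧ j₁ t < j₂ t ∧ k₁ t < k₂ t) ∧
    ∀ i j k, D i j k = ∑ t, ε t * Tblock (i₁ t) (i₂ t) (j₁ t) (j₂ t) (k₁ t) (k₂ t) i j k}
  zero_mem' := ⟨0, Fin.elim0, Fin.elim0, Fin.elim0, Fin.elim0, Fin.elim0, Fin.elim0, Fin.elim0,
    fun t => t.elim0, fun _ _ _ => by simp⟩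
  add_mem' := by
    rintro D E ⟨m, ε, i₁, i₂, j₁, j₂, k₁, k₂, hε, hD⟩
      ⟨m', ε', i₁', i₂', j₁', j₂', k₁', k₂', hε', hE⟩
    refine ⟨m + m', Fin.append ε ε', Fin.append i₁ i₁', Fin.append i₂ i₂', Fin.append j₁ j₁',
      Fin.append j₂ j₂', Fin.append k₁ k₁', Fin.append k₂ k₂', ?_, fun i j k => ?_⟩
    · refine Fin.addCases (fun t => ?_) (fun t => ?_)
      · simpa only [Fin.append_left] using hε t
      · simpa only [Fin.append_right] using hε' t
    · simp only [Pi.add_apply, hD, hE, Fin.sum_univ_add, Fin.append_left, Fin.append_right]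
  neg_mem' := by
    rintro D ⟨m, ε, i₁, i₂, j₁, j₂, k₁, k₂, hε, hD⟩
    refine ⟨m, -ε, i₁, i₂, j₁, j₂, k₁, k₂, fun t => ⟨?_, (hε t).2⟩, fun i j k => ?_⟩
    · rcases (hε t).1 with h | h <;> simp [h]
    · simp [hD, Finset.sum_neg_distrib]

theorem mem_tblockSums {n : ℕ} {D : Fin n → Fin n → Fin n → ℤ} :
    D ∈ tblockSums n ↔ ∃ (m : ℕ) (ε : Fin m → ℤ) (i₁ i₂ j₁ j₂ k₁ k₂ : Fin m → Fin n),
      (∀ t, (ε t = 1 ∨ ε t = -1) ∧ i₁ t < i₂ t ∧ j₁ t < j₂ t ∧ k₁ t < k₂ t) ∧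
      ∀ i j k, D i j k = ∑ t, ε t * Tblock (i₁ t) (i₂ t) (j₁ t) (j₂ t) (k₁ t) (k₂ t) i j k :=
  Iff.rfl

theorem tblock_mem_tblockSums {n : ℕ} {i₁ i₂ j₁ j₂ k₁ k₂ : Fin n}
    (hi : i₁ < i₂) (hj : j₁ < j₂) (hk : k₁ < k₂) :
    Tblock i₁ i₂ j₁ j₂ k₁ k₂ ∈ tblockSums n :=
  mem_tblockSums.mpr ⟨1, fun _ => 1, fun _ => i₁, fun _ => i₂, fun _ => j₁, fun _ => j₂,
    fun _ => k₁, fun _ => k₂, fun _ => ⟨Or.inl rfl, hi, hj, hk⟩, fun _ _ _ => by simp⟩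

theorem sum_nonzeroList {n : ℕ} (f : Fin n → ℤ) : (nonzeroList f).sum = ∑ x, f x := by
  rw [nonzeroList, List.sum_filter_bne_zero, Fin.sum_univ_def]

theorem List.sum_eq_one_of_alternating {l : List ℤ}
    (hget : ∀ i (h : i < l.length), l.get ⟨i, h⟩ = (-1) ^ i) (hlast : l.getLast? = some 1) :
    l.sum = 1 := by
  have hlen : 0 < l.length := List.length_pos_iff.mpr fun h => by simp [h] at hlast
  have heven : Even (l.length - 1) := by
    rw [List.getLast?_eq_getElem?, List.getElem?_eq_getElem (by omega), Option.some_inj] at hlast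
    rw [← neg_one_pow_eq_one_iff_even (R := ℤ) (by decide), ← hget _ (by omega)]
    exact hlast
  have hodd : ¬Even l.length := by
    rw [← Nat.sub_add_cancel hlen, Nat.even_add_one, not_not]
    exact heven
  calc l.sum = ∑ i : Fin l.length, (-1 : ℤ) ^ (i : ℕ) := by
        rw [← Fin.sum_univ_getElem]
        exact Finset.sum_congr rfl fun i _ => hget i i.isLt
    _ = 1 := by
        rw [Fin.sum_univ_eq_sum_range (fun i => (-1 : ℤ) ^ i), neg_one_geom_sum, if_neg hodd]

theorem AltLine.sum_eq_one_s9 {n : ℕ} {f : Fin n → ℤ} (h : AltLine f) : ∑ x, f x = 1 := by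
  rw [← sum_nonzeroList]
  exact List.sum_eq_one_of_alternating h.2.1 h.2.2

theorem eq_sum_erase_mul_tsign {n : ℕ} {f : Fin n → ℤ} (hf : ∑ x, f x = 0) (a p : Fin n) :
    f p = ∑ x ∈ univ.erase a, f x * tsign x a p := by
  by_cases hp : p = a
  · subst hp
    have hsum := Finset.add_sum_erase univ f (mem_univ p)
    rw [hf] at hsum
    have : ∀ x ∈ univ.erase p, f x * tsign x p p = -f x := fun x hx => by
      simp [tsign, Ne.symm (ne_of_mem_erase hx)]
    rw [Finset.sum_congr rfl this, Finset.sum_neg_distrib]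
    omega
  · have : ∀ x ∈ univ.erase a, f x * tsign x a p = if p = x then f x else 0 := fun x _ => by
      simp only [tsign, hp, if_false]; split_ifs <;> simp
    rw [Finset.sum_congr rfl this, Finset.sum_ite_eq, if_pos (mem_erase.mpr ⟨hp, mem_univ p⟩)]

theorem eq_sum_smul_tblock {n : ℕ} {D : Fin n → Fin n → Fin n → ℤ}
    (h₁ : ∀ j k, ∑ i, D i j k = 0) (h₂ : ∀ i k, ∑ j, D i j k = 0) (h₃ : ∀ i j, ∑ k, D i j k = 0)
    (a : Fin n) :
    D = ∑ x ∈ univ.erase a, ∑ y ∈ univ.erase a, ∑ z ∈ univ.erase a,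
      D x y z • Tblock x a y a z a := by
  funext p q r
  simp only [Finset.sum_apply, Pi.smul_apply, smul_eq_mul, Tblock]
  rw [eq_sum_erase_mul_tsign (h₁ q r) a p]
  refine Finset.sum_congr rfl fun x _ => ?_
  rw [eq_sum_erase_mul_tsign (h₂ x r) a q, Finset.sum_mul]
  refine Finset.sum_congr rfl fun y _ => ?_
  rw [eq_sum_erase_mul_tsign (h₃ x y) a r, Finset.sum_mul, Finset.sum_mul]
  exact Finset.sum_congr rfl fun z _ => by ring

theorem mem_tblockSums_of_lineSums_eq_zero {n : ℕ} {D : Fin n → Fin n → Fin n → ℤ}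
    (h₁ : ∀ j k, ∑ i, D i j k = 0) (h₂ : ∀ i k, ∑ j, D i j k = 0)
    (h₃ : ∀ i j, ∑ k, D i j k = 0) : D ∈ tblockSums n := by
  cases n with
  | zero => exact Subsingleton.elim 0 D ▸ zero_mem _
  | succ n =>
    rw [eq_sum_smul_tblock h₁ h₂ h₃ (Fin.last n)]
    have hlt : ∀ x ∈ univ.erase (Fin.last n), x < Fin.last n := fun x hx =>
      Fin.lt_last_iff_ne_last.mpr (ne_of_mem_erase hx)
    refine sum_mem fun x hx => sum_mem fun y hy => sum_mem fun z hz => zsmul_mem ?_ _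
    exact tblock_mem_tblockSums (hlt x hx) (hlt y hy) (hlt z hz)

theorem ashm_difference_sum_of_tblocks {n : ℕ}
    (A B : Fin n → Fin n → Fin n → ℤ) (hA : IsASHM A) (hB : IsASHM B) :
    ∃ (m : ℕ) (ε : Fin m → ℤ) (i₁ i₂ j₁ j₂ k₁ k₂ : Fin m → Fin n),
      (∀ t, (ε t = 1 ∨ ε t = -1) ∧ i₁ t < i₂ t ∧ j₁ t < j₂ t ∧ k₁ t < k₂ t) ∧
      ∀ i j k, A i j k - B i j k =
        ∑ t, ε t * Tblock (i₁ t) (i₂ t) (j₁ t) (j₂ t) (k₁ t) (k₂ t) i j k := by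
  obtain ⟨hA₁, hA₂, hA₃⟩ := hA
  obtain ⟨hB₁, hB₂, hB₃⟩ := hB
  exact mem_tblockSums.mp <| mem_tblockSums_of_lineSums_eq_zero
    (D := fun i j k => A i j k - B i j k)
    (fun j k => by rw [sum_sub_distrib, (hA₁ j k).sum_eq_one_s9, (hB₁ j k).sum_eq_one_s9, sub_self])
    (fun i k => by rw [sum_sub_distrib, (hA₂ i k).sum_eq_one_s9, (hB₂ i k).sum_eq_one_s9, sub_self])
    (fun i j => by rw [sum_sub_distrib, (hA₃ i j).sum_eq_one_s9, (hB₃ i j).sum_eq_one_s9, sub_self])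
end
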